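/- (Accuracy bound for TPA.) Let M be a column-stochastic n×n real matrix, let 0 < c < 1, and let q, b ∈ ℝ^n be stochastic vectors. Let S ≥ 1 and k ≥ 1 be natural numbers and set T = kS. Define: the exact CPI score vector r_CPI = ∑_{i=0}^{∞} c(1-c)^i M^i q; the family part f = ∑_{i=0}^{S-1} c(1-c)^i M^i q; the approximate neighbor part r̃_neighbor = (((1-c)^S - (1-c)^T)/(1 - (1-c)^S)) · f; the approximate stranger part r̃_stranger = ∑_{i=T}^{∞} c(1-c)^i M^i b; and the TPA score vector r_TPA = f + r̃_neighbor + r̃_stranger. Then ‖r_CPI - r_TPA‖₁ ≤ 2(1-c)^S. -/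

import Mathlib

/-!
Subtracting the family part, `r_CPI - r_TPA = t - (r̃_neighbor + r̃_stranger)`, where `t` is the
tail of the CPI series from iteration `S`. Powers of a column-stochastic matrix map stochastic
vectors to stochastic vectors, so `t`, `r̃_neighbor` and `r̃_stranger` are nonnegative vectors
of total mass `(1-c)^S`, at most `(1-c)^S - (1-c)^T` and `(1-c)^T` respectively. For
nonnegative `x, y` one has `‖x - y‖₁ ≤ ∑ x + ∑ y`, which gives `2(1-c)^S`.
-/

open Finset Matrix

theorem hasSum_mul_one_sub_pow_add {c : ℝ} (hc : |1 - c| < 1) (m : ℕ) :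
    HasSum (fun i => c * (1 - c) ^ (m + i)) ((1 - c) ^ m) := by
  have hc0 : c ≠ 0 := by rintro rfl; simp at hc
  have h := (hasSum_geometric_of_abs_lt_one hc).mul_left (c * (1 - c) ^ m)
  rw [sub_sub_cancel, mul_right_comm, mul_inv_cancel₀ hc0, one_mul] at h
  simpa only [pow_add, mul_assoc] using h

section Stochastic

variable {ι : Type*} [Fintype ι]

theorem sum_abs_sub_le_of_nonneg {x y : ι → ℝ} (hx : 0 ≤ x) (hy : 0 ≤ y) :
    ∑ j, |(x - y) j| ≤ ∑ j, x j + ∑ j, y j := by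
  rw [← sum_add_distrib]
  refine sum_le_sum fun j _ => (abs_sub (x j) (y j)).trans_eq ?_
  rw [abs_of_nonneg (hx j), abs_of_nonneg (hy j)]

theorem sum_div_smul_le_of_sum_eq {x : ι → ℝ} {a s : ℝ} (ha : 0 ≤ a) (hx : ∑ j, x j = s) :
    ∑ j, ((a / s) • x) j ≤ a := by
  simp only [Pi.smul_apply, smul_eq_mul, ← mul_sum, hx]
  rcases eq_or_ne s 0 with rfl | hs
  · simpa using ha
  · rw [div_mul_cancel₀ a hs]

theorem summable_smul_of_mem_stdSimplex {β : Type*} {v : β → ι → ℝ} {w : β → ℝ}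
    (hv : ∀ i, v i ∈ stdSimplex ℝ ι) (hw0 : ∀ i, 0 ≤ w i) (hw : Summable w) :
    Summable fun i => w i • v i := by
  refine hw.of_norm_bounded fun i => ?_
  have hvi : ‖v i‖ ≤ 1 := mem_closedBall_zero_iff.1 (stdSimplex_subset_closedBall (hv i))
  rw [norm_smul, Real.norm_of_nonneg (hw0 i)]
  exact mul_le_of_le_one_right (hw0 i) hvi

theorem sum_tsum_smul_of_mem_stdSimplex {β : Type*} {v : β → ι → ℝ} {w : β → ℝ}
    (hv : ∀ i, v i ∈ stdSimplex ℝ ι) (hw0 : ∀ i, 0 ≤ w i) (hw : Summable w) :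
    ∑ j, (∑' i, w i • v i) j = ∑' i, w i := by
  have hsum := summable_smul_of_mem_stdSimplex hv hw0 hw
  simp_rw [tsum_apply hsum]
  rw [← Summable.tsum_finsetSum fun j _ => Pi.summable.1 hsum j]
  refine tsum_congr fun i => ?_
  simp only [Pi.smul_apply, smul_eq_mul, ← mul_sum, (hv i).2, mul_one]

variable [DecidableEq ι]

theorem mulVec_mem_stdSimplex_of_mem_colStochastic {R : Type*} [CommSemiring R] [PartialOrder R]
    [IsOrderedRing R] {P : Matrix ι ι R} {x : ι → R} (hP : P ∈ colStochastic R ι)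
    (hx : x ∈ stdSimplex R ι) : P *ᵥ x ∈ stdSimplex R ι :=
  ⟨nonneg_mulVec_of_mem_colStochastic hP hx.1, (sum_mulVec_of_mem_colStochastic hP).trans hx.2⟩

noncomputable def cpiHead (P : Matrix ι ι ℝ) (c : ℝ) (x : ι → ℝ) (m : ℕ) : ι → ℝ :=
  ∑ i ∈ range m, (c * (1 - c) ^ i) • (P ^ i) *ᵥ x

noncomputable def cpiTail (P : Matrix ι ι ℝ) (c : ℝ) (x : ι → ℝ) (m : ℕ) : ι → ℝ :=
  ∑' i, (c * (1 - c) ^ (m + i)) • (P ^ (m + i)) *ᵥ x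

variable {P : Matrix ι ι ℝ} {c : ℝ} {x : ι → ℝ}

theorem summable_cpiTail_terms (hP : P ∈ colStochastic ℝ ι) (hx : x ∈ stdSimplex ℝ ι)
    (hc0 : 0 < c) (hc1 : c ≤ 1) (m : ℕ) :
    Summable fun i => (c * (1 - c) ^ (m + i)) • (P ^ (m + i)) *ᵥ x :=
  summable_smul_of_mem_stdSimplex
    (fun _ => mulVec_mem_stdSimplex_of_mem_colStochastic (pow_mem hP _) hx)
    (fun _ => mul_nonneg hc0.le (pow_nonneg (sub_nonneg.2 hc1) _))
    (hasSum_mul_one_sub_pow_add (abs_lt.2 ⟨by linarith, by linarith⟩) m).summable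

theorem cpiHead_nonneg (hP : P ∈ colStochastic ℝ ι) (hx : x ∈ stdSimplex ℝ ι) (hc0 : 0 ≤ c)
    (hc1 : c ≤ 1) (m : ℕ) : 0 ≤ cpiHead P c x m :=
  sum_nonneg fun _ _ => smul_nonneg (mul_nonneg hc0 (pow_nonneg (sub_nonneg.2 hc1) _))
    (mulVec_mem_stdSimplex_of_mem_colStochastic (pow_mem hP _) hx).1

theorem cpiTail_nonneg (hP : P ∈ colStochastic ℝ ι) (hx : x ∈ stdSimplex ℝ ι) (hc0 : 0 ≤ c)
    (hc1 : c ≤ 1) (m : ℕ) : 0 ≤ cpiTail P c x m :=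
  tsum_nonneg fun _ => smul_nonneg (mul_nonneg hc0 (pow_nonneg (sub_nonneg.2 hc1) _))
    (mulVec_mem_stdSimplex_of_mem_colStochastic (pow_mem hP _) hx).1

theorem sum_cpiTail (hP : P ∈ colStochastic ℝ ι) (hx : x ∈ stdSimplex ℝ ι) (hc0 : 0 < c)
    (hc1 : c ≤ 1) (m : ℕ) : ∑ j, cpiTail P c x m j = (1 - c) ^ m := by
  have hgeo := hasSum_mul_one_sub_pow_add (abs_lt.2 ⟨by linarith, by linarith⟩) m
  rw [cpiTail, sum_tsum_smul_of_mem_stdSimplex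
    (fun _ => mulVec_mem_stdSimplex_of_mem_colStochastic (pow_mem hP _) hx)
    (fun _ => mul_nonneg hc0.le (pow_nonneg (sub_nonneg.2 hc1) _)) hgeo.summable, hgeo.tsum_eq]

theorem cpiHead_add_cpiTail (hP : P ∈ colStochastic ℝ ι) (hx : x ∈ stdSimplex ℝ ι)
    (hc0 : 0 < c) (hc1 : c ≤ 1) (m : ℕ) :
    cpiHead P c x m + cpiTail P c x m = cpiTail P c x 0 := by
  have h := (summable_cpiTail_terms hP hx hc0 hc1 0).sum_add_tsum_nat_add m
  simpa only [cpiHead, cpiTail, zero_add, add_comm _ m] using h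

theorem sum_cpiHead (hP : P ∈ colStochastic ℝ ι) (hx : x ∈ stdSimplex ℝ ι) (hc0 : 0 < c)
    (hc1 : c ≤ 1) (m : ℕ) : ∑ j, cpiHead P c x m j = 1 - (1 - c) ^ m := by
  have h := congrArg (fun y => ∑ j, y j) (cpiHead_add_cpiTail hP hx hc0 hc1 m)
  simp only [Pi.add_apply, sum_add_distrib, sum_cpiTail hP hx hc0 hc1, pow_zero] at h
  linarith

end Stochastic

theorem tpa_accuracy_bound_general {n : ℕ} (M : Matrix (Fin n) (Fin n) ℝ)
    (hMnn : ∀ i j, 0 ≤ M i j) (hMcol : ∀ j, ∑ i, M i j = 1)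
    (c : ℝ) (hc0 : 0 < c) (hc1 : c < 1)
    (q : Fin n → ℝ) (hqnn : ∀ i, 0 ≤ q i) (hq1 : ∑ i, q i = 1)
    (b : Fin n → ℝ) (hbnn : ∀ i, 0 ≤ b i) (hb1 : ∑ i, b i = 1)
    (S k : ℕ) (hk : 1 ≤ k) (T : ℕ) (hT : T = k * S)
    (rCPI f rNb rSt rTPA : Fin n → ℝ)
    (hrCPI : rCPI = ∑' i : ℕ, (c * (1 - c) ^ i) • (M ^ i).mulVec q)
    (hf : f = ∑ i ∈ Finset.range S, (c * (1 - c) ^ i) • (M ^ i).mulVec q)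
    (hrNb : rNb = (((1 - c) ^ S - (1 - c) ^ T) / (1 - (1 - c) ^ S)) • f)
    (hrSt : rSt = ∑' i : ℕ, (c * (1 - c) ^ (T + i)) • (M ^ (T + i)).mulVec b)
    (hrTPA : rTPA = f + rNb + rSt) :
    ∑ j, |(rCPI - rTPA) j| ≤ 2 * (1 - c) ^ S := by
  have hM : M ∈ colStochastic ℝ (Fin n) := mem_colStochastic_iff_sum.2 ⟨hMnn, hMcol⟩
  have hq : q ∈ stdSimplex ℝ (Fin n) := ⟨hqnn, hq1⟩
  have hb : b ∈ stdSimplex ℝ (Fin n) := ⟨hbnn, hb1⟩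
  change f = cpiHead M c q S at hf
  change rSt = cpiTail M c b T at hrSt
  have hdiff : rCPI - rTPA = cpiTail M c q S - (rNb + rSt) := by
    have hrCPI' : rCPI = cpiTail M c q 0 := by simpa only [cpiTail, zero_add] using hrCPI
    rw [hrTPA, hrCPI', ← cpiHead_add_cpiTail hM hq hc0 hc1.le S, hf]
    abel
  have hnum : 0 ≤ (1 - c) ^ S - (1 - c) ^ T :=
    sub_nonneg.2 <| pow_le_pow_of_le_one (by linarith) (by linarith) <|
      hT ▸ Nat.le_mul_of_pos_left S hk
  have hden : 0 ≤ 1 - (1 - c) ^ S := sub_nonneg.2 (pow_le_one₀ (by linarith) (by linarith))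
  have hNb : 0 ≤ rNb :=
    hrNb ▸ smul_nonneg (div_nonneg hnum hden) (hf ▸ cpiHead_nonneg hM hq hc0.le hc1.le S)
  calc ∑ j, |(rCPI - rTPA) j|
      ≤ ∑ j, cpiTail M c q S j + ∑ j, (rNb + rSt) j :=
        hdiff ▸ sum_abs_sub_le_of_nonneg (cpiTail_nonneg hM hq hc0.le hc1.le S)
          (add_nonneg hNb (hrSt ▸ cpiTail_nonneg hM hb hc0.le hc1.le T))
    _ ≤ (1 - c) ^ S + (((1 - c) ^ S - (1 - c) ^ T) + (1 - c) ^ T) := by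
        simp only [Pi.add_apply, sum_add_distrib, hrSt, sum_cpiTail hM hq hc0 hc1.le,
          sum_cpiTail hM hb hc0 hc1.le]
        gcongr
        exact hrNb ▸ sum_div_smul_le_of_sum_eq hnum (hf ▸ sum_cpiHead hM hq hc0 hc1.le S)
    _ = 2 * (1 - c) ^ S := by ring

/-- Accuracy bound for TPA: `‖r_CPI - r_TPA‖₁ ≤ 2(1-c)^S`, where
`r_TPA = f + r̃_neighbor + r̃_stranger` combines the exact family part, the scaled
neighbor approximation, and the PageRank-based stranger approximation. -/
theorem tpa_accuracy_bound {n : ℕ} (M : Matrix (Fin n) (Fin n) ℝ)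
    (hMnn : ∀ i j, 0 ≤ M i j) (hMcol : ∀ j, ∑ i, M i j = 1)
    (c : ℝ) (hc0 : 0 < c) (hc1 : c < 1)
    (q : Fin n → ℝ) (hqnn : ∀ i, 0 ≤ q i) (hq1 : ∑ i, q i = 1)
    (b : Fin n → ℝ) (hbnn : ∀ i, 0 ≤ b i) (hb1 : ∑ i, b i = 1)
    (S k : ℕ) (hS : 1 ≤ S) (hk : 1 ≤ k) (T : ℕ) (hT : T = k * S)
    (rCPI f rNb rSt rTPA : Fin n → ℝ)
    (hrCPI : rCPI = ∑' i : ℕ, (c * (1 - c) ^ i) • (M ^ i).mulVec q)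
    (hf : f = ∑ i ∈ Finset.range S, (c * (1 - c) ^ i) • (M ^ i).mulVec q)
    (hrNb : rNb = (((1 - c) ^ S - (1 - c) ^ T) / (1 - (1 - c) ^ S)) • f)
    (hrSt : rSt = ∑' i : ℕ, (c * (1 - c) ^ (T + i)) • (M ^ (T + i)).mulVec b)
    (hrTPA : rTPA = f + rNb + rSt) :
    ∑ j, |(rCPI - rTPA) j| ≤ 2 * (1 - c) ^ S :=
  tpa_accuracy_bound_general M hMnn hMcol c hc0 hc1 q hqnn hq1 b hbnn hb1 S k hk T hT rCPI f rNb rSt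
    rTPA hrCPI hf hrNb hrSt hrTPA
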